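/- arXiv:math/0611127 — 3 statements merged into one kernel-verified Lean document; each statement's English description precedes it below -/
import Mathlib

section
/- For one-dimensional simple random walk S started at 0, the exact identity n^{2n} / ((n+k)^{n+k} (n-k)^{n-k}) = exp( - Σ_{l=1}^∞ (1/(l(2l-1))) k^{2l}/n^{2l-1} ) holds for all integers n ≥ 1 and |k| < n. -/
open Real

/-- the exact identity
`n^{2n} / ((n+k)^{n+k} (n-k)^{n-k}) = exp(-∑_{l≥1} k^{2l}/(l(2l-1) n^{2l-1}))`
for all integers `n ≥ 1` and `|k| < n`. -/
theorem stmt_9 (n : ℕ) (hn : 1 ≤ n) (k : ℤ) (hk : |k| < (n : ℤ)) :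
    (n : ℝ) ^ (2 * n) /
      ((((n : ℤ) + k : ℤ) : ℝ) ^ ((n : ℤ) + k).toNat *
        (((n : ℤ) - k : ℤ) : ℝ) ^ ((n : ℤ) - k).toNat) =
    Real.exp (-(∑' l : ℕ,
      (k : ℝ) ^ (2 * (l + 1)) / (((l : ℝ) + 1) * (2 * (l : ℝ) + 1) * (n : ℝ) ^ (2 * l + 1)))) := by
  obtain ⟨hk1, hk2⟩ := abs_lt.mp hk
  have hn0 : (0:ℝ) < n := by exact_mod_cast hn
  have hnne : (n:ℝ) ≠ 0 := hn0.ne'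
  set x : ℝ := (k:ℝ) / n with hxdef
  have hx : |x| < 1 := by
    rw [hxdef, abs_div, abs_of_pos hn0, div_lt_one hn0]
    exact_mod_cast hk
  obtain ⟨hx1, hx2⟩ := abs_lt.mp hx
  have hx2' : |x^2| < 1 := by
    rw [abs_pow]
    exact pow_lt_one₀ (abs_nonneg x) hx (by norm_num)
  have h1 := Real.hasSum_pow_div_log_of_abs_lt_one hx2'
  have h2 := (Real.hasSum_log_sub_log_of_abs_lt_one hx).mul_left x
  have comb := (h2.sub h1).mul_left (n:ℝ)
  have hfun : (fun l : ℕ => (n:ℝ) * (x * ((2:ℝ) * (1 / (2 * l + 1)) * x ^ (2 * l + 1)) -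
      (x^2) ^ (l + 1) / (l + 1))) =
      fun l : ℕ => (k : ℝ) ^ (2 * (l + 1)) / (((l : ℝ) + 1) * (2 * (l : ℝ) + 1) * (n : ℝ) ^ (2 * l + 1)) := by
    funext l
    have hl1 : ((l:ℝ) + 1) ≠ 0 := by positivity
    have hl2 : (2 * (l:ℝ) + 1) ≠ 0 := by positivity
    rw [hxdef, div_pow, div_pow, div_pow, ← pow_mul]
    field_simp
    ring
  rw [hfun] at comb
  rw [comb.tsum_eq]
  -- now prove the closed-form identity
  have hA : (0:ℤ) < (n:ℤ) + k := by linarith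
  have hB : (0:ℤ) < (n:ℤ) - k := by linarith
  have hAc : ((((n:ℤ) + k).toNat : ℝ)) = (n:ℝ) + k := by
    rw [← Int.cast_natCast, Int.toNat_of_nonneg hA.le]; push_cast; ring
  have hBc : ((((n:ℤ) - k).toNat : ℝ)) = (n:ℝ) - k := by
    rw [← Int.cast_natCast, Int.toNat_of_nonneg hB.le]; push_cast; ring
  have hApos : (0:ℝ) < (n:ℝ) + k := by
    have : (0:ℝ) < (((n:ℤ) + k : ℤ) : ℝ) := by exact_mod_cast hA
    push_cast at this; linarith
  have hBpos : (0:ℝ) < (n:ℝ) - k := by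
    have : (0:ℝ) < (((n:ℤ) - k : ℤ) : ℝ) := by exact_mod_cast hB
    push_cast at this; linarith
  have h1x : 1 + x = ((n:ℝ) + k) / n := by rw [hxdef]; field_simp
  have h1x' : 1 - x = ((n:ℝ) - k) / n := by rw [hxdef]; field_simp
  have hsq : 1 - x^2 = (1 - x) * (1 + x) := by ring
  have hp1 : (0:ℝ) < 1 + x := by linarith
  have hp2 : (0:ℝ) < 1 - x := by linarith
  -- rewrite logs
  have hlog1 : Real.log (1 + x) = Real.log ((n:ℝ) + k) - Real.log n := by
    rw [h1x, Real.log_div hApos.ne' hnne]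
  have hlog2 : Real.log (1 - x) = Real.log ((n:ℝ) - k) - Real.log n := by
    rw [h1x', Real.log_div hBpos.ne' hnne]
  have hlogsq : Real.log (1 - x^2) = Real.log (1 - x) + Real.log (1 + x) := by
    rw [hsq, Real.log_mul hp2.ne' hp1.ne']
  -- value of the sum
  have hS : (n:ℝ) * (x * (Real.log (1 + x) - Real.log (1 - x)) - -Real.log (1 - x^2)) =
      ((n:ℝ) + k) * Real.log ((n:ℝ) + k) + ((n:ℝ) - k) * Real.log ((n:ℝ) - k)
        - 2 * n * Real.log n := by
    rw [hlogsq, hlog1, hlog2, hxdef]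
    field_simp
    ring
  rw [hS]
  rw [neg_sub, Real.exp_sub, Real.exp_add]
  have en : Real.exp (2 * (n:ℝ) * Real.log n) = (n:ℝ) ^ (2 * n) := by
    rw [show (2 * (n:ℝ)) = ((2 * n : ℕ) : ℝ) by push_cast; ring,
      Real.exp_nat_mul, Real.exp_log hn0]
  have eA : Real.exp (((n:ℝ) + k) * Real.log ((n:ℝ) + k)) =
      ((((n:ℤ) + k).toNat : ℝ)) ^ ((n:ℤ) + k).toNat := by
    rw [← hAc, Real.exp_nat_mul, Real.exp_log (by rw [hAc]; exact hApos)]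
  have eB : Real.exp (((n:ℝ) - k) * Real.log ((n:ℝ) - k)) =
      ((((n:ℤ) - k).toNat : ℝ)) ^ ((n:ℤ) - k).toNat := by
    rw [← hBc, Real.exp_nat_mul, Real.exp_log (by rw [hBc]; exact hBpos)]
  rw [en, eA, eB]
  have c1 : ((((n:ℤ) + k : ℤ)) : ℝ) = ((((n:ℤ) + k).toNat : ℝ)) := by
    rw [hAc]; push_cast; ring
  have c2 : ((((n:ℤ) - k : ℤ)) : ℝ) = ((((n:ℤ) - k).toNat : ℝ)) := by
    rw [hBc]; push_cast; ring
  rw [c1, c2]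
end

section
/- For each integer n ≥ 2 and 1 ≤ j ≤ n-1, let a_j = a_j(n) > 0 be the unique positive solution of cosh(a_j) = 2 - cos(πj/n). Then j/(2n) ≤ a_j ≤ πj/n for all 1 ≤ j ≤ n-1. -/
open Real

lemma aux_cosh_half (x : ℝ) : Real.cosh x = 1 + 2 * Real.sinh (x / 2) ^ 2 := by
  have h := Real.cosh_sq (x / 2)
  have h2 : Real.cosh x = 2 * Real.cosh (x / 2) ^ 2 - 1 := by
    have := Real.cosh_two_mul (x / 2)
    rw [show 2 * (x / 2) = x by ring] at this
    linarith
  linarith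

lemma aux_cosh_lb (x : ℝ) (hx : 0 ≤ x) : 1 + x ^ 2 / 2 ≤ Real.cosh x := by
  rw [aux_cosh_half]
  have h : x / 2 ≤ Real.sinh (x / 2) := Real.self_le_sinh_iff.2 (by linarith)
  nlinarith [h]

lemma aux_sinh_ub (x : ℝ) (hx : 0 ≤ x) : Real.sinh x ≤ x * Real.exp x := by
  rw [Real.sinh_eq]
  have h : 1 - 2 * x ≤ Real.exp (-(2 * x)) := by
    have := Real.add_one_le_exp (-(2 * x)); linarith
  have h2 : Real.exp (-x) = Real.exp x * Real.exp (-(2*x)) := by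
    rw [← Real.exp_add]; ring_nf
  have h3 : Real.exp x * (1 - 2 * x) ≤ Real.exp x * Real.exp (-(2*x)) :=
    mul_le_mul_of_nonneg_left h (Real.exp_pos x).le
  rw [← h2] at h3
  nlinarith [Real.exp_pos x]

lemma aux_exp_quarter : Real.exp (1 / 4 : ℝ) ≤ 2 := by
  have h4 : Real.exp ((1:ℝ)/4) ^ 4 = Real.exp 1 := by
    rw [← Real.exp_nat_mul]; norm_num
  have he : Real.exp 1 < 2.7182818286 := Real.exp_one_lt_d9
  nlinarith [Real.exp_pos ((1:ℝ)/4), sq_nonneg (Real.exp ((1:ℝ)/4) - 2),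
    sq_nonneg (Real.exp ((1:ℝ)/4) ^ 2 - 4), sq_nonneg (Real.exp ((1:ℝ)/4) + 2)]

/-- if `a_j > 0` solves `cosh a_j = 2 - cos(πj/n)` for `1 ≤ j ≤ n-1`,
then `j/(2n) ≤ a_j ≤ πj/n`. -/
theorem stmt_14 (n j : ℕ) (hn : 2 ≤ n) (hj : 1 ≤ j) (hjn : j ≤ n - 1)
    (a : ℝ) (ha : 0 < a)
    (hcosh : Real.cosh a = 2 - Real.cos (Real.pi * j / n)) :
    (j : ℝ) / (2 * n) ≤ a ∧ a ≤ Real.pi * j / n := by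
  have hn0 : (0:ℝ) < n := by positivity
  have hj0 : (0:ℝ) < j := by exact_mod_cast hj
  have hjn' : (j:ℝ) ≤ n := by
    have : j ≤ n := le_trans hjn (Nat.sub_le n 1)
    exact_mod_cast this
  set θ : ℝ := Real.pi * j / n with hθ
  have hθpos : 0 < θ := by positivity
  have hθle : θ ≤ Real.pi := by
    rw [hθ, div_le_iff₀ hn0]
    have := Real.pi_pos
    nlinarith
  set t : ℝ := (j : ℝ) / (2 * n) with ht
  have htpos : 0 < t := by positivity
  have htle : t ≤ 1 / 2 := by
    rw [ht, div_le_div_iff₀ (by positivity) (by norm_num)]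
    linarith
  have hteq : t = θ / (2 * Real.pi) := by
    rw [ht, hθ]; field_simp
  constructor
  · -- lower bound: cosh t ≤ cosh a
    -- sinh (t/2) ≤ (t/2) * exp(t/2) ≤ t since exp(t/2) ≤ exp(1/4) ≤ 2
    have hs : Real.sinh (t / 2) ≤ t := by
      have h1 := aux_sinh_ub (t / 2) (by linarith)
      have h2 : Real.exp (t / 2) ≤ 2 := by
        calc Real.exp (t / 2) ≤ Real.exp (1/4 : ℝ) :=
              Real.exp_le_exp.2 (by linarith)
          _ ≤ 2 := aux_exp_quarter
      nlinarith
    have hcosh_t : Real.cosh t ≤ 1 + 2 * t ^ 2 := by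
      rw [aux_cosh_half]
      have hsnn : 0 ≤ Real.sinh (t / 2) := Real.sinh_nonneg_iff.2 (by linarith)
      nlinarith
    have hcos : Real.cos θ ≤ 1 - 2 / Real.pi ^ 2 * θ ^ 2 := by
      apply Real.cos_le_one_sub_mul_cos_sq
      rw [abs_of_pos hθpos]; exact hθle
    have hle : Real.cosh t ≤ Real.cosh a := by
      rw [hcosh]
      have hpi := Real.pi_pos
      have ht2 : 2 * t ^ 2 ≤ 2 / Real.pi ^ 2 * θ ^ 2 := by
        rw [hteq, div_pow,
          show 2 * (θ ^ 2 / (2 * Real.pi) ^ 2) = 2 * θ ^ 2 / (4 * Real.pi ^ 2) by ring,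
          show 2 / Real.pi ^ 2 * θ ^ 2 = 2 * θ ^ 2 / Real.pi ^ 2 by ring,
          div_le_div_iff₀ (by positivity) (by positivity)]
        nlinarith [sq_nonneg θ, sq_nonneg Real.pi]
      linarith
    have := Real.cosh_le_cosh.1 hle
    rwa [abs_of_pos htpos, abs_of_pos ha] at this
  · -- upper bound: cosh a ≤ cosh θ
    have hle : Real.cosh a ≤ Real.cosh θ := by
      rw [hcosh]
      have h1 := aux_cosh_lb θ hθpos.le
      have h2 := Real.one_sub_sq_div_two_le_cos (x := θ)
      linarith
    have := Real.cosh_le_cosh.1 hle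
    rwa [abs_of_pos ha, abs_of_pos hθpos] at this
end

section
/- Let f be the bounded solution of the discrete Dirichlet problem in the half-infinite strip 𝓡(n) = {(x,y) ∈ Z^2 : x ≥ 1, 1 ≤ y ≤ n-1} with boundary value 1 on {(0,y) : 1 ≤ y ≤ n-1} and 0 on the rest of the boundary. Then there exists a constant K > 0 such that f(n,y) ≤ K y/n for all n ≥ 2 and all 1 ≤ y ≤ n-1. -/
open Real Finset

noncomputable section

namespace Stmt19




def tt (n j : ℕ) : ℝ := 2 - Real.cos (π * j / n)

def rr (n j : ℕ) : ℝ := tt n j + Real.sqrt ((tt n j)^2 - 1)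

lemma one_le_tt (n j : ℕ) : 1 ≤ tt n j := by
  have := Real.cos_le_one (π * j / n); unfold tt; linarith

lemma one_le_rr (n j : ℕ) : 1 ≤ rr n j := by
  have h := one_le_tt n j
  have : 0 ≤ Real.sqrt ((tt n j)^2 - 1) := Real.sqrt_nonneg _
  unfold rr; linarith

lemma rr_pos (n j : ℕ) : 0 < rr n j := lt_of_lt_of_le one_pos (one_le_rr n j)

lemma rr_add_inv (n j : ℕ) : rr n j + (rr n j)⁻¹ = 2 * tt n j := by
  have h1 := one_le_tt n j
  have hs : Real.sqrt ((tt n j)^2 - 1) ^ 2 = (tt n j)^2 - 1 :=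
    Real.sq_sqrt (by nlinarith)
  have hr : rr n j ≠ 0 := ne_of_gt (rr_pos n j)
  have key : rr n j * (2 * tt n j - rr n j) = 1 := by
    unfold rr at *; nlinarith [Real.sqrt_nonneg ((tt n j)^2 - 1)]
  field_simp
  nlinarith [key]


lemma sumcos (n : ℕ) (hn : 1 ≤ n) (m : ℤ) (hm : ¬ ((2*(n:ℤ)) ∣ m)) :
    ∑ j ∈ Finset.range n, Real.cos (π * m * j / n) =
      if Even m then 0 else 1 := by
  have hnR : (n:ℝ) ≠ 0 := Nat.cast_ne_zero.2 (by omega)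
  set φ : ℝ := π * m / n with hφ
  set ω : ℂ := Complex.exp (φ * Complex.I) with hω
  have hω1 : ω ≠ 1 := by
    intro h
    rw [hω, Complex.exp_eq_one_iff] at h
    obtain ⟨k, hk⟩ := h
    have hk' : (φ:ℂ) * Complex.I = ((k * (2*π) : ℝ):ℂ) * Complex.I := by
      push_cast; linear_combination hk
    have h2 : (φ:ℝ) = k * (2*π) := by
      exact_mod_cast mul_right_cancel₀ Complex.I_ne_zero hk'
    rw [hφ] at h2
    have hπ : (π:ℝ) ≠ 0 := Real.pi_ne_zero
    have h3 : π * (m:ℝ) = π * (2 * n * k) := by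
      field_simp at h2
      linear_combination π * h2
    have h3' : (m:ℝ) = 2 * n * k := mul_left_cancel₀ hπ h3
    have h4 : m = 2 * n * k := by exact_mod_cast h3'
    exact hm ⟨k, by linarith⟩
  have hterm : ∀ j : ℕ, Real.cos (π * m * j / n) = (ω ^ j).re := by
    intro j
    rw [hω, ← Complex.exp_nat_mul]
    have : (j:ℂ) * (φ * Complex.I) = ((π * m * j / n : ℝ) : ℂ) * Complex.I := by
      rw [hφ]; push_cast; ring
    rw [this, Complex.exp_ofReal_mul_I_re]
  have hsum : ∑ j ∈ Finset.range n, Real.cos (π * m * j / n)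
      = (∑ j ∈ Finset.range n, ω ^ j).re := by
    rw [Complex.re_sum]; exact Finset.sum_congr rfl fun j _ => hterm j
  have hgeom : ∑ j ∈ Finset.range n, ω ^ j = (ω ^ n - 1) / (ω - 1) := geom_sum_eq hω1 n
  have hωn : ω ^ n = Complex.exp ((π:ℂ) * m * Complex.I) := by
    rw [hω, ← Complex.exp_nat_mul]
    have hnC : (n:ℂ) ≠ 0 := Nat.cast_ne_zero.2 (by omega)
    congr 1
    rw [hφ]
    push_cast
    field_simp
  rcases Int.even_or_odd m with he | ho
  · -- even case : ω^n = 1, sum = 0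
    obtain ⟨k, hk⟩ := he
    have hpow : ω ^ n = 1 := by
      rw [hωn]
      have h5 : (π:ℂ) * m * Complex.I = (k : ℂ) * (2 * π * Complex.I) := by
        push_cast [hk]; ring
      rw [h5, Complex.exp_int_mul_two_pi_mul_I]
    rw [if_pos ⟨k, hk⟩, hsum, hgeom, hpow]
    simp only [sub_self, zero_div, Complex.zero_re]
  · -- odd case
    have hne : ¬ Even m := by simpa [Int.not_even_iff_odd] using ho
    obtain ⟨k, hk⟩ := ho
    have hωnval : ω ^ n = -1 := by
      rw [hωn]
      have h5 : (π:ℂ) * m * Complex.I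
          = (k:ℂ) * (2 * π * Complex.I) + π * Complex.I := by
        push_cast [hk]; ring
      rw [h5, Complex.exp_add, Complex.exp_int_mul_two_pi_mul_I, Complex.exp_pi_mul_I]
      ring
    have hcs : ω = (Real.cos φ : ℂ) + (Real.sin φ : ℂ) * Complex.I := by
      rw [hω, Complex.exp_mul_I]
      simp [Complex.ofReal_cos, Complex.ofReal_sin]
    have hc1 : Real.cos φ ≠ 1 := by
      intro hc
      apply hω1
      have hs0 : Real.sin φ = 0 := by
        have := Real.sin_sq_add_cos_sq φ; rw [hc] at this; nlinarith
      rw [hcs, hc, hs0]; simp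
    have hb2 : (Real.sin φ)^2 = 1 - (Real.cos φ)^2 := by
      have := Real.sin_sq_add_cos_sq φ; linarith
    have hωm1 : ω - 1 ≠ 0 := sub_ne_zero.2 hω1
    have hca : (1 : ℝ) - Real.cos φ ≠ 0 := fun h => hc1 (by linarith)
    set q : ℝ := Real.sin φ / (1 - Real.cos φ) with hq
    have key : (ω ^ n - 1) / (ω - 1)
        = 1 + (q : ℂ) * Complex.I := by
      rw [hωnval, div_eq_iff hωm1, hcs]
      rw [Complex.ext_iff]
      constructor
      · simp only [Complex.add_re, Complex.add_im, Complex.mul_re, Complex.mul_im,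
          Complex.sub_re, Complex.sub_im, Complex.one_re, Complex.one_im,
          Complex.ofReal_re, Complex.ofReal_im, Complex.I_re, Complex.I_im,
          Complex.neg_re]
        rw [hq]
        field_simp
        nlinarith [hb2]
      · simp only [Complex.add_re, Complex.add_im, Complex.mul_re, Complex.mul_im,
          Complex.sub_re, Complex.sub_im, Complex.one_re, Complex.one_im,
          Complex.ofReal_re, Complex.ofReal_im, Complex.I_re, Complex.I_im,
          Complex.neg_im]
        rw [hq]
        field_simp
        ring
    rw [if_neg hne, hsum, hgeom, key]
    simp



lemma range_eq_insert_Ioo (n : ℕ) (hn : 1 ≤ n) :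
    Finset.range n = insert 0 (Finset.Ioo 0 n) := by
  ext j; simp [Finset.mem_range, Finset.mem_Ioo]; omega

lemma sumcos_Ioo (n : ℕ) (hn : 1 ≤ n) (m : ℤ) (hm : ¬ ((2*(n:ℤ)) ∣ m)) :
    ∑ j ∈ Finset.Ioo 0 n, Real.cos (π * m * j / n) =
      (if Even m then 0 else 1) - 1 := by
  have h := sumcos n hn m hm
  rw [range_eq_insert_Ioo n hn, Finset.sum_insert (by simp)] at h
  simp only [Nat.cast_zero, mul_zero, zero_div, Real.cos_zero] at h
  linarith [h]

lemma not_dvd_of_bounds (n : ℕ) (m : ℤ) (h0 : m ≠ 0) (hb : |m| < 2*n) :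
    ¬ ((2*(n:ℤ)) ∣ m) := by
  intro hd
  have h2 := Int.le_of_dvd (abs_pos.2 h0) ((dvd_abs _ _).2 hd)
  have h3 : (0:ℤ) ≤ 2*n := by positivity
  linarith

lemma orth (n : ℕ) (hn : 2 ≤ n) (k l : ℕ) (hk : k ∈ Finset.Ioo 0 n)
    (hl : l ∈ Finset.Ioo 0 n) :
    ∑ j ∈ Finset.Ioo 0 n, Real.sin (π * j * k / n) * Real.sin (π * j * l / n)
      = if k = l then (n:ℝ)/2 else 0 := by
  simp only [Finset.mem_Ioo] at hk hl
  obtain ⟨hk1, hk2⟩ := hk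
  obtain ⟨hl1, hl2⟩ := hl
  set m₁ : ℤ := (k:ℤ) - (l:ℤ) with hm₁
  set m₂ : ℤ := (k:ℤ) + (l:ℤ) with hm₂
  have key : ∀ j : ℕ, Real.sin (π * j * k / n) * Real.sin (π * j * l / n)
      = (Real.cos (π * (m₁:ℝ) * j / n) - Real.cos (π * (m₂:ℝ) * j / n)) / 2 := by
    intro j
    have e1 : (π * (m₁:ℝ) * j / n : ℝ) = π * j * k / n - π * j * l / n := by
      rw [hm₁]; push_cast; ring
    have e2 : (π * (m₂:ℝ) * j / n : ℝ) = π * j * k / n + π * j * l / n := by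
      rw [hm₂]; push_cast; ring
    rw [e1, e2, Real.cos_sub, Real.cos_add]; ring
  rw [Finset.sum_congr rfl fun j _ => key j]
  rw [← Finset.sum_div, Finset.sum_sub_distrib]
  have h1n : 1 ≤ n := by omega
  have hsum2 : ∑ j ∈ Finset.Ioo 0 n, Real.cos (π * (m₂:ℝ) * j / n)
      = (if Even m₂ then (0:ℝ) else 1) - 1 := by
    apply sumcos_Ioo n h1n
    refine not_dvd_of_bounds n m₂ (by omega) ?_
    rw [abs_of_pos (by omega : (0:ℤ) < m₂)]
    omega
  by_cases hkl : k = l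
  · subst hkl
    have e0 : ∀ j ∈ Finset.Ioo 0 n, Real.cos (π * (m₁:ℝ) * j / n) = 1 := by
      intro j _
      have : m₁ = 0 := by omega
      rw [this]; norm_num
    rw [Finset.sum_congr rfl e0, Finset.sum_const, hsum2,
      if_pos (show Even m₂ from ⟨(k:ℤ), by omega⟩), if_pos rfl]
    have hcard : #(Finset.Ioo 0 n) = n - 1 := by simp
    simp only [hcard, nsmul_eq_mul, mul_one]
    rw [Nat.cast_sub h1n]
    push_cast
    ring
  · have hsum1 : ∑ j ∈ Finset.Ioo 0 n, Real.cos (π * (m₁:ℝ) * j / n)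
        = (if Even m₁ then (0:ℝ) else 1) - 1 := by
      apply sumcos_Ioo n h1n
      refine not_dvd_of_bounds n m₁ (by omega) ?_
      rw [abs_sub_lt_iff]
      constructor <;> omega
    rw [hsum1, hsum2, if_neg hkl]
    have hpar : Even m₁ ↔ Even m₂ := by
      constructor <;> intro ⟨c, hc⟩
      · exact ⟨c + l, by omega⟩
      · exact ⟨c - l, by omega⟩
    by_cases hev : Even m₁
    · rw [if_pos hev, if_pos (hpar.1 hev)]; ring
    · rw [if_neg hev, if_neg (fun h => hev (hpar.2 h))]; ring


def bb (n j : ℕ) : ℝ := (2/n) * ∑ k ∈ Finset.Ioo 0 n, Real.sin (π * j * k / n)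

def FF (n : ℕ) (x y : ℤ) : ℝ :=
  ∑ j ∈ Finset.Ioo 0 n, bb n j * (rr n j) ^ (-x) * Real.sin (π * j * y / n)

lemma abs_bb_le (n j : ℕ) (hn : 1 ≤ n) : |bb n j| ≤ 2 := by
  unfold bb
  rw [abs_mul]
  have h1 : |(2:ℝ)/n| = 2/n := abs_of_pos (by positivity)
  have h2 : |∑ k ∈ Finset.Ioo 0 n, Real.sin (π * j * k / n)| ≤ (n:ℝ) := by
    calc |∑ k ∈ Finset.Ioo 0 n, Real.sin (π * j * k / n)|
        ≤ ∑ k ∈ Finset.Ioo 0 n, |Real.sin (π * j * k / n)| := Finset.abs_sum_le_sum_abs _ _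
      _ ≤ ∑ k ∈ Finset.Ioo 0 n, 1 := Finset.sum_le_sum fun k _ => Real.abs_sin_le_one _
      _ = ((n:ℝ) - 1) := by
          simp [Finset.sum_const]
          rw [Nat.cast_sub hn]; push_cast; ring
      _ ≤ (n:ℝ) := by linarith
  rw [h1]
  calc (2/(n:ℝ)) * |∑ k ∈ Finset.Ioo 0 n, Real.sin (π * j * k / n)|
      ≤ (2/(n:ℝ)) * n := by
        apply mul_le_mul_of_nonneg_left h2 (by positivity)
    _ = 2 := by field_simp

lemma sin_rec (n j : ℕ) (y : ℤ) :
    Real.sin (π * j * (y+1) / n) + Real.sin (π * j * (y-1) / n)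
      = 2 * Real.cos (π * j / n) * Real.sin (π * j * y / n) := by
  have e1 : (π * j * ((y:ℝ)+1) / n) = π * j * y / n + π * j / n := by ring
  have e2 : (π * j * ((y:ℝ)-1) / n) = π * j * y / n - π * j / n := by ring
  push_cast
  rw [e1, e2, Real.sin_add, Real.sin_sub]
  ring

lemma zpow_rec (n j : ℕ) (x : ℤ) :
    (rr n j) ^ (-(x+1)) + (rr n j) ^ (-(x-1))
      = 2 * tt n j * (rr n j) ^ (-x) := by
  have hr0 : rr n j ≠ 0 := ne_of_gt (rr_pos n j)
  have e1 : -(x+1) = -x + (-1) := by ring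
  have e2 : -(x-1) = -x + 1 := by ring
  rw [e1, e2, zpow_add₀ hr0, zpow_add₀ hr0, zpow_neg_one, zpow_one]
  have := rr_add_inv n j
  nlinarith [this, zpow_pos (rr_pos n j) (-x)]

lemma FF_harmonic (n : ℕ) (x y : ℤ) :
    (FF n (x+1) y + FF n (x-1) y + FF n x (y+1) + FF n x (y-1)) / 4 = FF n x y := by
  unfold FF
  rw [← Finset.sum_add_distrib, ← Finset.sum_add_distrib, ← Finset.sum_add_distrib,
    Finset.sum_div]
  apply Finset.sum_congr rfl
  intro j hj
  push_cast
  have h1 := zpow_rec n j x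
  have h2 := sin_rec n j y
  have htt : tt n j = 2 - Real.cos (π * j / n) := rfl
  have expand : bb n j * rr n j ^ (-(x+1)) * Real.sin (π * j * y / n)
      + bb n j * rr n j ^ (-(x-1)) * Real.sin (π * j * y / n)
      + bb n j * rr n j ^ (-x) * Real.sin (π * j * (y+1) / n)
      + bb n j * rr n j ^ (-x) * Real.sin (π * j * (y-1) / n)
      = bb n j * Real.sin (π * j * y / n) * ((rr n j ^ (-(x+1)) + rr n j ^ (-(x-1))))
      + bb n j * rr n j ^ (-x) * (Real.sin (π * j * (y+1) / n) + Real.sin (π * j * (y-1) / n)) := by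
    ring
  rw [expand, h1, h2, htt]
  ring

lemma FF_bot (n : ℕ) (x : ℤ) : FF n x 0 = 0 := by
  unfold FF
  apply Finset.sum_eq_zero
  intro j hj
  norm_num

lemma FF_top (n : ℕ) (hn : 1 ≤ n) (x : ℤ) : FF n x (n:ℤ) = 0 := by
  unfold FF
  apply Finset.sum_eq_zero
  intro j hj
  have : (π * j * ((n:ℤ):ℝ) / n) = j * π := by
    have : (n:ℝ) ≠ 0 := Nat.cast_ne_zero.2 (by omega)
    push_cast
    field_simp
  rw [this, Real.sin_nat_mul_pi, mul_zero]

lemma FF_left (n : ℕ) (hn : 2 ≤ n) (y : ℤ) (hy1 : 1 ≤ y) (hy2 : y ≤ (n:ℤ) - 1) :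
    FF n 0 y = 1 := by
  have h1n : 1 ≤ n := by omega
  set y' : ℕ := y.toNat with hy'
  have hyy : ((y':ℕ):ℤ) = y := Int.toNat_of_nonneg (by omega)
  have hyR : ((y:ℤ):ℝ) = ((y':ℕ):ℝ) := by rw [← hyy]; push_cast; ring
  have hy'mem : y' ∈ Finset.Ioo 0 n := by
    simp only [Finset.mem_Ioo]; omega
  unfold FF bb
  simp only [neg_zero, zpow_zero, mul_one]
  rw [Finset.sum_congr rfl (fun j _ => by rw [hyR])]
  have horth := fun k hk => orth n hn k y' hk hy'mem
  calc ∑ j ∈ Finset.Ioo 0 n,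
      (2/(n:ℝ) * ∑ k ∈ Finset.Ioo 0 n, Real.sin (π * j * k / n)) * Real.sin (π * j * y' / n)
      = ∑ j ∈ Finset.Ioo 0 n, ∑ k ∈ Finset.Ioo 0 n,
          (2/(n:ℝ)) * (Real.sin (π * j * k / n) * Real.sin (π * j * y' / n)) := by
        apply Finset.sum_congr rfl
        intro j _
        rw [Finset.mul_sum, Finset.sum_mul]
        apply Finset.sum_congr rfl
        intro k _
        ring
    _ = ∑ k ∈ Finset.Ioo 0 n, ∑ j ∈ Finset.Ioo 0 n,
          (2/(n:ℝ)) * (Real.sin (π * j * k / n) * Real.sin (π * j * y' / n)) :=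
        Finset.sum_comm
    _ = ∑ k ∈ Finset.Ioo 0 n, (2/(n:ℝ)) * (if k = y' then (n:ℝ)/2 else 0) := by
        apply Finset.sum_congr rfl
        intro k hk
        rw [← Finset.mul_sum, horth k hk]
    _ = (2/(n:ℝ)) * ((n:ℝ)/2) := by
        rw [← Finset.mul_sum, Finset.sum_ite_eq' (Finset.Ioo 0 n) y' (fun _ => (n:ℝ)/2),
          if_pos hy'mem]
    _ = 1 := by
        have : (n:ℝ) ≠ 0 := Nat.cast_ne_zero.2 (by omega)
        field_simp


lemma one_sub_cos (θ : ℝ) : 1 - Real.cos θ = 2 * Real.sin (θ/2) ^ 2 := by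
  have h := Real.cos_two_mul' (θ/2)
  have h2 := Real.sin_sq_add_cos_sq (θ/2)
  have h3 : 2 * (θ/2) = θ := by ring
  rw [h3] at h
  nlinarith [h, h2]

lemma rr_lb (n j : ℕ) (hj1 : 0 < j) (hj2 : j < n) : 1 + 2*(j:ℝ)/n ≤ rr n j := by
  have hnn : 0 < n := lt_trans hj1 hj2
  have hn0 : (0:ℝ) < n := by exact_mod_cast hnn
  have hj0 : (0:ℝ) < j := by exact_mod_cast hj1
  have hjn : (j:ℝ) ≤ n := by exact_mod_cast hj2.le
  have hjn0 : 0 ≤ (j:ℝ)/n := by positivity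
  set θ : ℝ := π * j / n with hθ
  have hθ0 : 0 ≤ θ := by rw [hθ]; positivity
  have hθπ : θ ≤ π := by
    rw [hθ, div_le_iff₀ hn0]
    nlinarith [Real.pi_pos]
  have hsin : (j:ℝ)/n ≤ Real.sin (θ/2) := by
    have h := Real.mul_le_sin (by linarith : (0:ℝ) ≤ θ/2) (by linarith : θ/2 ≤ π/2)
    have harg : 2/π * (θ/2) = (j:ℝ)/n := by
      rw [hθ]; field_simp [Real.pi_ne_zero]
    rw [harg] at h
    exact h
  have hcos : 2 * ((j:ℝ)/n)^2 ≤ 1 - Real.cos θ := by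
    rw [one_sub_cos θ]
    have h1 : ((j:ℝ)/n)^2 ≤ Real.sin (θ/2)^2 := by
      apply sq_le_sq'
      · linarith
      · exact hsin
    linarith
  have htt : 1 + 2*((j:ℝ)/n)^2 ≤ tt n j := by
    unfold tt
    rw [hθ] at hcos
    linarith
  have htt1 : 1 ≤ tt n j := one_le_tt n j
  have hsq : (2*(j:ℝ)/n)^2 ≤ (tt n j)^2 - 1 := by
    have e1 : 2*((j:ℝ)/n)^2 ≤ tt n j - 1 := by linarith
    have e2 : (2:ℝ) ≤ tt n j + 1 := by linarith
    have e3 : (2*((j:ℝ)/n)^2) * 2 ≤ (tt n j - 1)*(tt n j + 1) :=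
      mul_le_mul e1 e2 (by norm_num) (by linarith)
    calc (2*(j:ℝ)/n)^2 = (2*((j:ℝ)/n)^2) * 2 := by ring
      _ ≤ (tt n j - 1)*(tt n j + 1) := e3
      _ = (tt n j)^2 - 1 := by ring
  have hsqrt : 2*(j:ℝ)/n ≤ Real.sqrt ((tt n j)^2 - 1) := by
    rw [show (2*(j:ℝ)/n) = Real.sqrt ((2*(j:ℝ)/n)^2) from (Real.sqrt_sq (by positivity)).symm]
    exact Real.sqrt_le_sqrt hsq
  unfold rr
  linarith

lemma exp_le_one_add_two_mul (x : ℝ) (hx0 : 0 ≤ x) (hx1 : x ≤ 1) :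
    Real.exp x ≤ 1 + 2*x := by
  have hb := Real.exp_bound (x := x) (by rw [abs_of_nonneg hx0]; exact hx1)
    (n := 1) Nat.one_pos
  simp only [Finset.range_one, Finset.sum_singleton, pow_zero, Nat.factorial_zero,
    Nat.cast_one, div_one, pow_one] at hb
  rw [abs_of_nonneg hx0] at hb
  norm_num [Nat.factorial] at hb
  have h := abs_le.1 hb
  linarith [h.2]

lemma rr_npow_ge (n j : ℕ) (hj1 : 0 < j) (hj2 : j < n) :
    Real.exp j ≤ (rr n j)^n := by
  have hnn : 0 < n := lt_trans hj1 hj2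
  have hn0 : (0:ℝ) < n := by exact_mod_cast hnn
  have hx1 : (j:ℝ)/n ≤ 1 := by
    rw [div_le_one hn0]; exact_mod_cast hj2.le
  have hx0 : 0 ≤ (j:ℝ)/n := by positivity
  have h1 : Real.exp ((j:ℝ)/n) ≤ rr n j := by
    calc Real.exp ((j:ℝ)/n) ≤ 1 + 2*((j:ℝ)/n) := exp_le_one_add_two_mul _ hx0 hx1
      _ = 1 + 2*(j:ℝ)/n := by ring
      _ ≤ rr n j := rr_lb n j hj1 hj2
  have h2 : Real.exp (j:ℝ) = (Real.exp ((j:ℝ)/n))^n := by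
    rw [← Real.exp_nat_mul]
    congr 1
    field_simp
  rw [h2]
  exact pow_le_pow_left₀ (Real.exp_nonneg _) h1 n

lemma rr_zpow_bound (n j : ℕ) (hj1 : 0 < j) (hj2 : j < n) :
    (rr n j) ^ (-(n:ℤ)) ≤ (1/2:ℝ)^j := by
  have h1 : (rr n j) ^ (-(n:ℤ)) = ((rr n j)^n)⁻¹ := by
    rw [zpow_neg, zpow_natCast]
  rw [h1]
  have h2 : Real.exp j ≤ (rr n j)^n := rr_npow_ge n j hj1 hj2
  have h3 : ((rr n j)^n)⁻¹ ≤ (Real.exp j)⁻¹ := by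
    apply inv_anti₀ (Real.exp_pos _) h2
  calc ((rr n j)^n)⁻¹ ≤ (Real.exp j)⁻¹ := h3
    _ = (Real.exp 1)⁻¹ ^ j := by
        have he : (Real.exp 1)^j = Real.exp j := by
          rw [← Real.exp_nat_mul]; norm_num
        rw [inv_pow, he]
    _ ≤ (1/2:ℝ)^j := by
        apply pow_le_pow_left₀ (by positivity)
        have h2e : (2:ℝ) ≤ Real.exp 1 := by
          have := Real.add_one_le_exp 1; linarith
        have := inv_anti₀ (by norm_num : (0:ℝ) < 2) h2e
        simpa using this


lemma maxp (X N : ℤ) (hX : 2 ≤ X) (hN : 2 ≤ N) (w : ℤ → ℤ → ℝ)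
    (hsub : ∀ x y, 1 ≤ x → x ≤ X-1 → 1 ≤ y → y ≤ N-1 →
      w x y ≤ (w (x+1) y + w (x-1) y + w x (y+1) + w x (y-1))/4)
    (hbd : ∀ x y, 0 ≤ x → x ≤ X → 0 ≤ y → y ≤ N →
      (x = 0 ∨ x = X ∨ y = 0 ∨ y = N) →
      ((1 ≤ x ∧ x ≤ X-1) ∨ (1 ≤ y ∧ y ≤ N-1)) → w x y ≤ 0) :
    ∀ x y, 1 ≤ x → x ≤ X-1 → 1 ≤ y → y ≤ N-1 → w x y ≤ 0 := by
  intro x y hx1 hx2 hy1 hy2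
  have hXR : (0:ℝ) < ((X:ℝ))^2 := by
    have : (2:ℝ) ≤ (X:ℝ) := by exact_mod_cast hX
    nlinarith
  have key : ∀ δ : ℝ, 0 < δ → w x y ≤ δ * (X:ℝ)^2 := by
    intro δ hδ
    classical
    set S : Finset (ℤ×ℤ) := (Finset.Icc 0 X ×ˢ Finset.Icc 0 N).filter
      (fun p => (1 ≤ p.1 ∧ p.1 ≤ X-1) ∨ (1 ≤ p.2 ∧ p.2 ≤ N-1)) with hS
    set v : ℤ×ℤ → ℝ := fun p => w p.1 p.2 + δ * ((p.1:ℤ):ℝ)^2 with hv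
    have hmem : (x,y) ∈ S := by
      simp only [hS, Finset.mem_filter, Finset.mem_product, Finset.mem_Icc]
      refine ⟨⟨⟨by omega, by omega⟩, ⟨by omega, by omega⟩⟩, Or.inl ⟨hx1, hx2⟩⟩
    obtain ⟨p, hp, hmax⟩ := Finset.exists_max_image S v ⟨(x,y), hmem⟩
    simp only [hS, Finset.mem_filter, Finset.mem_product, Finset.mem_Icc] at hp
    obtain ⟨⟨⟨hp10, hp1X⟩, hp20, hp2N⟩, hpfil⟩ := hp
    have hvp : v p ≤ δ * (X:ℝ)^2 := by
      by_cases hint : 1 ≤ p.1 ∧ p.1 ≤ X-1 ∧ 1 ≤ p.2 ∧ p.2 ≤ N-1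
      · exfalso
        obtain ⟨hi1, hi2, hi3, hi4⟩ := hint
        have hq1 : ((p.1+1, p.2) : ℤ×ℤ) ∈ S := by
          simp only [hS, Finset.mem_filter, Finset.mem_product, Finset.mem_Icc]
          exact ⟨⟨⟨by omega, by omega⟩, ⟨by omega, by omega⟩⟩, Or.inr ⟨hi3, hi4⟩⟩
        have hq2 : ((p.1-1, p.2) : ℤ×ℤ) ∈ S := by
          simp only [hS, Finset.mem_filter, Finset.mem_product, Finset.mem_Icc]
          exact ⟨⟨⟨by omega, by omega⟩, ⟨by omega, by omega⟩⟩, Or.inr ⟨hi3, hi4⟩⟩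
        have hq3 : ((p.1, p.2+1) : ℤ×ℤ) ∈ S := by
          simp only [hS, Finset.mem_filter, Finset.mem_product, Finset.mem_Icc]
          exact ⟨⟨⟨by omega, by omega⟩, ⟨by omega, by omega⟩⟩, Or.inl ⟨hi1, hi2⟩⟩
        have hq4 : ((p.1, p.2-1) : ℤ×ℤ) ∈ S := by
          simp only [hS, Finset.mem_filter, Finset.mem_product, Finset.mem_Icc]
          exact ⟨⟨⟨by omega, by omega⟩, ⟨by omega, by omega⟩⟩, Or.inl ⟨hi1, hi2⟩⟩
        have m1 := hmax _ hq1
        have m2 := hmax _ hq2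
        have m3 := hmax _ hq3
        have m4 := hmax _ hq4
        have hs := hsub p.1 p.2 hi1 hi2 hi3 hi4
        simp only [hv] at m1 m2 m3 m4
        have c1 : ((p.1+1 : ℤ):ℝ) = (p.1:ℝ) + 1 := by push_cast; ring
        have c2 : ((p.1-1 : ℤ):ℝ) = (p.1:ℝ) - 1 := by push_cast; ring
        rw [c1] at m1
        rw [c2] at m2
        -- m1 : w (p.1+1) p.2 + δ ((p.1:ℝ)+1)^2 ≤ w p.1 p.2 + δ p.1^2 etc.
        nlinarith [m1, m2, m3, m4, hs, hδ]
      · have hbdy : p.1 = 0 ∨ p.1 = X ∨ p.2 = 0 ∨ p.2 = N := by omega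
        have hw0 : w p.1 p.2 ≤ 0 := hbd p.1 p.2 hp10 hp1X hp20 hp2N hbdy hpfil
        have hsq : ((p.1:ℤ):ℝ)^2 ≤ ((X:ℤ):ℝ)^2 := by
          have h1 : (0:ℝ) ≤ (p.1:ℝ) := by exact_mod_cast hp10
          have h2 : ((p.1):ℝ) ≤ (X:ℝ) := by exact_mod_cast hp1X
          nlinarith
        simp only [hv]
        nlinarith [hw0, hsq, hδ]
    have hstart : w x y ≤ v (x,y) := by
      simp only [hv]
      have : 0 ≤ δ * ((x:ℤ):ℝ)^2 := by positivity
      linarith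
    calc w x y ≤ v (x,y) := hstart
      _ ≤ v p := hmax _ hmem
      _ ≤ δ * (X:ℝ)^2 := hvp
  by_contra hcon
  push_neg at hcon
  have := key (w x y / (2*(X:ℝ)^2)) (by positivity)
  rw [div_mul_eq_mul_div, mul_comm] at this
  have : w x y ≤ w x y / 2 := by
    calc w x y ≤ (X:ℝ)^2 * w x y / (2*(X:ℝ)^2) := this
      _ = w x y / 2 := by field_simp
  linarith


lemma geom_bound (n : ℕ) : ∑ j ∈ Finset.Ioo 0 n, (j:ℝ) * (1/2:ℝ)^j ≤ 2 := by
  have hr : ‖(1/2:ℝ)‖ < 1 := by rw [Real.norm_eq_abs]; rw [abs_lt]; constructor <;> norm_num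
  have hs := hasSum_coe_mul_geometric_of_norm_lt_one (𝕜 := ℝ) hr
  have htsum : ∑' j : ℕ, (j:ℝ) * (1/2:ℝ)^j = (1/2:ℝ) / (1 - 1/2)^2 := hs.tsum_eq
  have hle : ∑ j ∈ Finset.Ioo 0 n, (j:ℝ) * (1/2:ℝ)^j ≤ ∑' j : ℕ, (j:ℝ) * (1/2:ℝ)^j := by
    apply Summable.sum_le_tsum
    · intro i _
      positivity
    · exact hs.summable
  rw [htsum] at hle
  norm_num at hle
  exact hle

lemma FF_final (n : ℕ) (hn : 2 ≤ n) (y : ℤ) (hy1 : 1 ≤ y) (hy2 : y ≤ (n:ℤ)-1) :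
    FF n (n:ℤ) y ≤ 4*π*y/n := by
  have hnR : (0:ℝ) < n := by exact_mod_cast (by omega : 0 < n)
  have hyR : (1:ℝ) ≤ (y:ℝ) := by exact_mod_cast hy1
  unfold FF
  have hterm : ∀ j ∈ Finset.Ioo 0 n,
      bb n j * (rr n j) ^ (-(n:ℤ)) * Real.sin (π * j * y / n)
        ≤ (2*π*(y:ℝ)/n) * ((j:ℝ) * (1/2:ℝ)^j) := by
    intro j hj
    simp only [Finset.mem_Ioo] at hj
    have h1 : |bb n j * (rr n j) ^ (-(n:ℤ)) * Real.sin (π * j * y / n)|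
        ≤ 2 * ((1/2:ℝ)^j) * (π * j * y / n) := by
      rw [abs_mul, abs_mul]
      have ha : |bb n j| ≤ 2 := abs_bb_le n j (by omega)
      have hbpos : (0:ℝ) < (rr n j) ^ (-(n:ℤ)) := zpow_pos (rr_pos n j) _
      have hb : |(rr n j) ^ (-(n:ℤ))| = (rr n j) ^ (-(n:ℤ)) := abs_of_pos hbpos
      have hb2 : (rr n j) ^ (-(n:ℤ)) ≤ (1/2:ℝ)^j := rr_zpow_bound n j hj.1 hj.2
      have hargpos : 0 ≤ π * j * y / n := by
        have : (0:ℝ) ≤ (y:ℝ) := by linarith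
        positivity
      have hc : |Real.sin (π * j * y / n)| ≤ π * j * y / n := by
        calc |Real.sin (π * j * y / n)| ≤ |π * j * y / n| := Real.abs_sin_le_abs
          _ = π * j * y / n := abs_of_nonneg hargpos
      apply mul_le_mul
      · apply mul_le_mul ha (by rw [hb]; exact hb2) (by positivity) (by norm_num)
      · exact hc
      · exact abs_nonneg _
      · positivity
    calc bb n j * (rr n j) ^ (-(n:ℤ)) * Real.sin (π * j * y / n)
        ≤ |bb n j * (rr n j) ^ (-(n:ℤ)) * Real.sin (π * j * y / n)| := le_abs_self _
      _ ≤ 2 * ((1/2:ℝ)^j) * (π * j * y / n) := h1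
      _ = (2*π*(y:ℝ)/n) * ((j:ℝ) * (1/2:ℝ)^j) := by ring
  calc ∑ j ∈ Finset.Ioo 0 n, bb n j * (rr n j) ^ (-(n:ℤ)) * Real.sin (π * j * y / n)
      ≤ ∑ j ∈ Finset.Ioo 0 n, (2*π*(y:ℝ)/n) * ((j:ℝ) * (1/2:ℝ)^j) :=
        Finset.sum_le_sum hterm
    _ = (2*π*(y:ℝ)/n) * ∑ j ∈ Finset.Ioo 0 n, ((j:ℝ) * (1/2:ℝ)^j) := by
        rw [Finset.mul_sum]
    _ ≤ (2*π*(y:ℝ)/n) * 2 := by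
        apply mul_le_mul_of_nonneg_left (geom_bound n)
        have : (0:ℝ) ≤ (y:ℝ) := by linarith
        positivity
    _ = 4*π*y/n := by ring

lemma sin_pos_pi_div (n : ℕ) (hn : 2 ≤ n) : 0 < Real.sin (π / n) := by
  apply Real.sin_pos_of_pos_of_lt_pi
  · have : (0:ℝ) < n := by exact_mod_cast (by omega : 0 < n)
    positivity
  · have h2 : (2:ℝ) ≤ n := by exact_mod_cast hn
    have := Real.pi_pos
    rw [div_lt_iff₀ (by linarith)]
    nlinarith

lemma sin_ge (n : ℕ) (hn : 2 ≤ n) (y : ℤ) (hy1 : 1 ≤ y) (hy2 : y ≤ (n:ℤ)-1) :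
    Real.sin (π / n) ≤ Real.sin (π * y / n) := by
  have hnR : (0:ℝ) < n := by exact_mod_cast (by omega : 0 < n)
  have hpi := Real.pi_pos
  have mono := Real.strictMonoOn_sin.monotoneOn
  have haux : ∀ z : ℤ, 1 ≤ z → 2*z ≤ n → Real.sin (π / n) ≤ Real.sin (π * z / n) := by
    intro z hz1 hz2
    have hz1R : (1:ℝ) ≤ (z:ℝ) := by exact_mod_cast hz1
    have hz2R : 2*(z:ℝ) ≤ n := by exact_mod_cast hz2
    apply mono
    · constructor
      · have : (0:ℝ) ≤ π/n := by positivity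
        linarith
      · rw [div_le_div_iff₀ hnR (by norm_num : (0:ℝ) < 2)]
        nlinarith [Real.pi_pos, hz2R]
    · constructor
      · have : (0:ℝ) ≤ π*z/n := by positivity
        linarith
      · rw [div_le_div_iff₀ hnR (by norm_num : (0:ℝ) < 2)]
        nlinarith [mul_le_mul_of_nonneg_left hz2R Real.pi_pos.le]
    · rw [div_le_div_iff₀ hnR hnR]
      nlinarith [mul_le_mul_of_nonneg_left hz1R (by positivity : (0:ℝ) ≤ π*(n:ℝ))]
  by_cases hc : 2*y ≤ (n:ℤ)
  · exact haux y hy1 (by exact_mod_cast hc)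
  · have hz1 : (1:ℤ) ≤ (n:ℤ) - y := by omega
    have hz2 : 2 * ((n:ℤ) - y) ≤ (n:ℤ) := by omega
    have h := haux ((n:ℤ) - y) hz1 hz2
    have e2 : ((((n:ℤ) - y) : ℤ):ℝ) = (n:ℝ) - (y:ℝ) := by push_cast; ring
    rw [e2] at h
    have e3 : π * ((n:ℝ) - (y:ℝ))/n = π - π * y / n := by field_simp
    rw [e3, Real.sin_pi_sub] at h
    exact h

lemma FF_abs_le (n : ℕ) (hn : 2 ≤ n) (x y : ℤ) (hx : 0 ≤ x) :
    |FF n x y| ≤ 2*n := by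
  unfold FF
  calc |∑ j ∈ Finset.Ioo 0 n, bb n j * (rr n j) ^ (-x) * Real.sin (π * j * y / n)|
      ≤ ∑ j ∈ Finset.Ioo 0 n, |bb n j * (rr n j) ^ (-x) * Real.sin (π * j * y / n)| :=
        Finset.abs_sum_le_sum_abs _ _
    _ ≤ ∑ j ∈ Finset.Ioo 0 n, 2 := by
        apply Finset.sum_le_sum
        intro j hj
        rw [abs_mul, abs_mul]
        have h1 : |bb n j| ≤ 2 := abs_bb_le n j (by omega)
        have hzp : (0:ℝ) < (rr n j)^(-x) := zpow_pos (rr_pos n j) _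
        have h2 : |(rr n j)^(-x)| ≤ 1 := by
          rw [abs_of_pos hzp]
          exact zpow_le_one_of_nonpos₀ (one_le_rr n j) (by omega)
        have h3 : |Real.sin (π * j * y / n)| ≤ 1 := Real.abs_sin_le_one _
        calc |bb n j| * |(rr n j)^(-x)| * |Real.sin (π * j * y / n)|
            ≤ 2 * 1 * 1 := by
              apply mul_le_mul _ h3 (abs_nonneg _) (by norm_num)
              apply mul_le_mul h1 h2 (abs_nonneg _) (by norm_num)
          _ = 2 := by norm_num
    _ = 2 * (Finset.Ioo 0 n).card := by rw [Finset.sum_const]; ring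
    _ ≤ 2*n := by
        have : (Finset.Ioo 0 n).card = n - 1 := by simp
        rw [this]
        have : ((n:ℕ) - 1 : ℕ) ≤ n := by omega
        have hc : (((n:ℕ) - 1 : ℕ):ℝ) ≤ (n:ℝ) := by exact_mod_cast this
        linarith


def gg (n : ℕ) (x y : ℤ) : ℝ := (rr n 1) ^ x * Real.sin (π * (1:ℕ) * y / n)

lemma zpow_rec' (n j : ℕ) (x : ℤ) :
    (rr n j) ^ (x+1) + (rr n j) ^ (x-1) = 2 * tt n j * (rr n j) ^ x := by
  have hr0 : rr n j ≠ 0 := ne_of_gt (rr_pos n j)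
  rw [zpow_add₀ hr0, zpow_sub₀ hr0, zpow_one]
  have h := rr_add_inv n j
  have h' : (rr n j) * (rr n j) + 1 = 2 * tt n j * rr n j := by
    field_simp at h
    linarith [h]
  field_simp
  linear_combination h'

lemma gg_harmonic (n : ℕ) (x y : ℤ) :
    (gg n (x+1) y + gg n (x-1) y + gg n x (y+1) + gg n x (y-1)) / 4 = gg n x y := by
  unfold gg
  have h1 := zpow_rec' n 1 x
  have h2 := sin_rec n 1 y
  have htt : tt n 1 = 2 - Real.cos (π * (1:ℕ) / n) := rfl
  have h2' := h2
  push_cast at h2'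
  push_cast
  have expand : (rr n 1)^(x+1) * Real.sin (π * ((y:ℝ)) / n)
      + (rr n 1)^(x-1) * Real.sin (π * ((y:ℝ)) / n)
      + (rr n 1)^x * Real.sin (π * ((y:ℝ)+1) / n)
      + (rr n 1)^x * Real.sin (π * ((y:ℝ)-1) / n)
      = Real.sin (π * ((y:ℝ)) / n) * ((rr n 1)^(x+1) + (rr n 1)^(x-1))
      + (rr n 1)^x * (Real.sin (π * ((y:ℝ)+1) / n) + Real.sin (π * ((y:ℝ)-1) / n)) := by
    ring
  have harg1 : π * ((y:ℝ)) / (n:ℝ) = π * 1 * (y:ℝ) / n := by ring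
  have harg2 : π * ((y:ℝ)+1) / (n:ℝ) = π * 1 * ((y:ℝ)+1) / n := by ring
  have harg3 : π * ((y:ℝ)-1) / (n:ℝ) = π * 1 * ((y:ℝ)-1) / n := by ring
  push_cast at htt
  rw [← harg1, ← harg2, ← harg3] at h2' ⊢
  rw [expand, h1, h2', htt]
  ring

lemma gg_nonneg (n : ℕ) (hn : 2 ≤ n) (x y : ℤ) (hy1 : 0 ≤ y) (hy2 : y ≤ (n:ℤ)) :
    0 ≤ gg n x y := by
  unfold gg
  apply mul_nonneg (le_of_lt (zpow_pos (rr_pos n 1) x))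
  apply Real.sin_nonneg_of_nonneg_of_le_pi
  · have : (0:ℝ) ≤ (y:ℝ) := by exact_mod_cast hy1
    have hnR : (0:ℝ) < n := by exact_mod_cast (by omega : 0 < n)
    positivity
  · have hnR : (0:ℝ) < n := by exact_mod_cast (by omega : 0 < n)
    have hyR : (y:ℝ) ≤ (n:ℝ) := by exact_mod_cast hy2
    rw [div_le_iff₀ hnR]
    push_cast
    nlinarith [Real.pi_pos]

lemma gg_zero_bot (n : ℕ) (x : ℤ) : gg n x 0 = 0 := by
  unfold gg; norm_num

lemma gg_zero_top (n : ℕ) (hn : 2 ≤ n) (x : ℤ) : gg n x (n:ℤ) = 0 := by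
  unfold gg
  have hnR : (n:ℝ) ≠ 0 := Nat.cast_ne_zero.2 (by omega)
  have : (π * ((1:ℕ):ℝ) * (((n:ℤ)):ℝ) / n) = π := by push_cast; field_simp
  rw [this, Real.sin_pi, mul_zero]

-- main comparison
lemma main_comp (n : ℕ) (hn : 2 ≤ n) (f : ℤ → ℤ → ℝ)
    (hbdd : ∃ C : ℝ, ∀ x y : ℤ, 0 ≤ x → 0 ≤ y → y ≤ (n : ℤ) → |f x y| ≤ C)
    (hharm : ∀ x y : ℤ, 1 ≤ x → 1 ≤ y → y ≤ (n : ℤ) - 1 →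
      (f (x + 1) y + f (x - 1) y + f x (y + 1) + f x (y - 1)) / 4 = f x y)
    (hleft : ∀ y : ℤ, 1 ≤ y → y ≤ (n : ℤ) - 1 → f 0 y = 1)
    (hzero : ∀ x : ℤ, 1 ≤ x → f x 0 = 0 ∧ f x n = 0)
    (y : ℤ) (hy1 : 1 ≤ y) (hy2 : y ≤ (n:ℤ) - 1) :
    f n y ≤ FF n n y := by
  obtain ⟨C, hC⟩ := hbdd
  have hC0 : 0 ≤ C := le_trans (abs_nonneg _) (hC 0 1 le_rfl zero_le_one (by omega))
  have hnR : (0:ℝ) < n := by exact_mod_cast (by omega : 0 < n)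
  set s : ℝ := Real.sin (π / n) with hs
  have hs0 : 0 < s := sin_pos_pi_div n hn
  have hr1 : 1 < rr n 1 := by
    have := rr_lb n 1 one_pos (by omega)
    have h2 : (0:ℝ) < 2*(1:ℝ)/n := by positivity
    push_cast at this
    linarith
  -- the value of the barrier at the conclusion point
  set gval : ℝ := gg n (n:ℤ) y with hgval
  have hgvpos : 0 < gval := by
    rw [hgval]
    unfold gg
    apply mul_pos (zpow_pos (rr_pos n 1) _)
    have := sin_ge n hn y hy1 hy2
    push_cast
    rw [show π * 1 * (y:ℝ) / n = π * y / n by ring]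
    linarith
  have key : ∀ ε : ℝ, 0 < ε → f n y ≤ FF n n y + ε * gval := by
    intro ε hε
    -- choose X
    obtain ⟨X0, hX0⟩ := pow_unbounded_of_one_lt ((C + 2*n)/(ε*s)) hr1
    set X : ℕ := X0 + n + 1 with hX
    have hXpow : ((C + 2*n)/(ε*s)) < (rr n 1)^X := by
      calc ((C + 2*n)/(ε*s)) < (rr n 1)^X0 := hX0
        _ ≤ (rr n 1)^X := pow_le_pow_right₀ hr1.le (by omega)
    have hXbig : C + 2*n < ε*s*(rr n 1)^X := by
      rw [div_lt_iff₀ (by positivity)] at hXpow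
      nlinarith [hXpow]
    set w : ℤ → ℤ → ℝ := fun x' y' => f x' y' - FF n x' y' - ε * gg n x' y' with hw
    have hmp := maxp (X:ℤ) (n:ℤ) (by push_cast; omega) (by push_cast; omega) w
    have hsub : ∀ x' y', 1 ≤ x' → x' ≤ (X:ℤ)-1 → 1 ≤ y' → y' ≤ (n:ℤ)-1 →
        w x' y' ≤ (w (x'+1) y' + w (x'-1) y' + w x' (y'+1) + w x' (y'-1))/4 := by
      intro x' y' h1 h2 h3 h4
      have hf := hharm x' y' h1 h3 h4
      have hF := FF_harmonic n x' y'
      have hg := gg_harmonic n x' y'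
      simp only [hw]
      have hg2 : (ε * gg n (x'+1) y' + ε * gg n (x'-1) y' + ε * gg n x' (y'+1)
          + ε * gg n x' (y'-1))/4 = ε * gg n x' y' := by
        linear_combination ε * hg
      linarith [hf, hF, hg2]
    have hbd : ∀ x' y', 0 ≤ x' → x' ≤ (X:ℤ) → 0 ≤ y' → y' ≤ (n:ℤ) →
        (x' = 0 ∨ x' = (X:ℤ) ∨ y' = 0 ∨ y' = (n:ℤ)) →
        ((1 ≤ x' ∧ x' ≤ (X:ℤ)-1) ∨ (1 ≤ y' ∧ y' ≤ (n:ℤ)-1)) → w x' y' ≤ 0 := by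
      intro x' y' hx0 hxX hy0 hyn hcase hfil
      simp only [hw]
      rcases hcase with h0 | hXc | hb0 | hbn
      · -- x' = 0
        have hyint : 1 ≤ y' ∧ y' ≤ (n:ℤ)-1 := by
          rcases hfil with ⟨ha, _⟩ | hb
          · omega
          · exact hb
        subst h0
        rw [hleft y' hyint.1 hyint.2, FF_left n hn y' hyint.1 hyint.2]
        have := gg_nonneg n hn 0 y' hy0 hyn
        nlinarith [this, hε]
      · -- x' = X
        have hyint : 1 ≤ y' ∧ y' ≤ (n:ℤ)-1 := by
          rcases hfil with ⟨ha, hb⟩ | hb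
          · omega
          · exact hb
        subst hXc
        have hf : f (X:ℤ) y' ≤ C := le_trans (le_abs_self _) (hC _ _ (by positivity) hy0 hyn)
        have hF : -(2*(n:ℝ)) ≤ FF n (X:ℤ) y' := by
          have := FF_abs_le n hn (X:ℤ) y' (by positivity)
          have h' := (abs_le.1 this).1
          linarith
        have hgg : ε*s*(rr n 1)^X ≤ ε * gg n (X:ℤ) y' := by
          unfold gg
          have hsy : s ≤ Real.sin (π * (1:ℕ) * y' / n) := by
            have := sin_ge n hn y' hyint.1 hyint.2
            push_cast
            rw [show π * 1 * (y':ℝ) / n = π * y' / n by ring]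
            exact this
          have hzp : ((rr n 1):ℝ) ^ ((X:ℕ):ℤ) = (rr n 1)^X := zpow_natCast _ _
          rw [hzp]
          have hrpos : (0:ℝ) < (rr n 1)^X := pow_pos (rr_pos n 1) X
          calc ε*s*(rr n 1)^X ≤ ε * Real.sin (π * (1:ℕ) * y' / n) * (rr n 1)^X := by
                apply mul_le_mul_of_nonneg_right _ hrpos.le
                exact mul_le_mul_of_nonneg_left hsy hε.le
            _ = ε * ((rr n 1)^X * Real.sin (π * (1:ℕ) * y' / n)) := by ring
        linarith [hf, hF, hgg, hXbig]
      · -- y' = 0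
        have hxint : 1 ≤ x' ∧ x' ≤ (X:ℤ)-1 := by
          rcases hfil with hb | ⟨ha, _⟩
          · exact hb
          · omega
        subst hb0
        rw [(hzero x' hxint.1).1, FF_bot, gg_zero_bot]
        norm_num
      · -- y' = n
        have hxint : 1 ≤ x' ∧ x' ≤ (X:ℤ)-1 := by
          rcases hfil with hb | ⟨ha, _⟩
          · exact hb
          · omega
        subst hbn
        rw [(hzero x' hxint.1).2, FF_top n (by omega), gg_zero_top n hn]
        norm_num
    have hconc := hmp hsub hbd (n:ℤ) y (by omega) (by push_cast; omega) hy1 hy2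
    simp only [hw] at hconc
    rw [hgval]
    linarith [hconc]
  -- conclude by ε → 0
  by_contra hcon
  push_neg at hcon
  set d : ℝ := f n y - FF n n y with hd
  have hd0 : 0 < d := by rw [hd]; linarith
  have := key (d/(2*gval)) (by positivity)
  have heq : d/(2*gval)*gval = d/2 := by field_simp
  rw [heq] at this
  rw [hd] at this
  linarith [this, hd0]
end Stmt19

/-- if `f` is the bounded solution of the discrete Dirichlet problem in
the half-infinite strip `𝓡(n)` with boundary value `1` on the left side and `0`
elsewhere, then `f(n,y) ≤ K y / n` for a universal constant `K`. -/
theorem stmt_19 :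
    ∃ K > 0, ∀ n : ℕ, 2 ≤ n → ∀ f : ℤ → ℤ → ℝ,
      -- boundedness on the closed strip
      (∃ C : ℝ, ∀ x y : ℤ, 0 ≤ x → 0 ≤ y → y ≤ (n : ℤ) → |f x y| ≤ C) →
      -- discrete harmonicity in 𝓡(n)
      (∀ x y : ℤ, 1 ≤ x → 1 ≤ y → y ≤ (n : ℤ) - 1 →
        (f (x + 1) y + f (x - 1) y + f x (y + 1) + f x (y - 1)) / 4 = f x y) →
      -- boundary value 1 on the left side
      (∀ y : ℤ, 1 ≤ y → y ≤ (n : ℤ) - 1 → f 0 y = 1) →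
      -- boundary value 0 on the rest of the boundary
      (∀ x : ℤ, 1 ≤ x → f x 0 = 0 ∧ f x n = 0) →
      ∀ y : ℤ, 1 ≤ y → y ≤ (n : ℤ) - 1 → f n y ≤ K * y / n := by
  refine ⟨13, by norm_num, ?_⟩
  intro n hn f hbdd hharm hleft hzero y hy1 hy2
  have h1 := Stmt19.main_comp n hn f hbdd hharm hleft hzero y hy1 hy2
  have h2 := Stmt19.FF_final n hn y hy1 hy2
  have hnR : (0:ℝ) < n := by exact_mod_cast (by omega : 0 < n)
  have hyR : (1:ℝ) ≤ (y:ℝ) := by exact_mod_cast hy1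
  have h3 : 4*Real.pi*(y:ℝ)/n ≤ 13*(y:ℝ)/n := by
    have hy0 : (0:ℝ) ≤ (y:ℝ) := by linarith
    have hp : 4*Real.pi*(y:ℝ) ≤ 13*(y:ℝ) := by nlinarith [Real.pi_lt_d2]
    exact (div_le_div_iff_of_pos_right hnR).2 hp
  calc f n y ≤ Stmt19.FF n n y := h1
    _ ≤ 4*Real.pi*(y:ℝ)/n := h2
    _ ≤ 13*(y:ℝ)/n := h3
end
end
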